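/- arXiv:2509.22408 — 3 statements merged into one kernel-verified Lean document; each statement's English description precedes it below -/
import Mathlib

section
/- A 6×6 real matrix X satisfies ᵗX h + h X = 0 if and only if X has the block form X = [[X₁, ᵗX₂, t·I₁,₁],[X₄, X₅, X₂L],[s·I₁,₁, LᵗX₄, -LᵗX₁L]] for some 2×2 matrices X₁, X₂, X₄, a skew-symmetric 2×2 matrix X₅, and scalars s, t ∈ ℝ, where I₁,₁ = diag(1,-1) and L = [[0,1],[1,0]]. -/
/-!
Since `h` is symmetric, `Xᵀ h + h X = (h X)ᵀ + h X` is symmetric, so in `2 × 2` blocks the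
condition amounts to the six blocks on and above the diagonal. As `L² = 1` and `Lᵀ = L`, three of
them express the blocks below the antidiagonal through those above it and one says that the
central block is skew; the remaining two say that the off-diagonal corner blocks `C` satisfy
`Cᵀ L + L C = 0`, whose solutions are exactly the multiples of `I₁,₁`.
-/

open Matrix

/-- The 2×2 matrix L = [[0,1],[1,0]]. -/
def Lm : Matrix (Fin 2) (Fin 2) ℝ := !![0, 1; 1, 0]

/-- The 2×2 matrix I₁,₁ = diag(1,-1). -/
def I11 : Matrix (Fin 2) (Fin 2) ℝ := !![1, 0; 0, -1]

/-- Assemble a 6×6 matrix from a 3×3 array of 2×2 blocks. -/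
def blk (M : Matrix (Fin 3) (Fin 3) (Matrix (Fin 2) (Fin 2) ℝ)) :
    Matrix (Fin 6) (Fin 6) ℝ :=
  Matrix.of fun i j =>
    M ⟨i.val / 2, by have := i.isLt; omega⟩ ⟨j.val / 2, by have := j.isLt; omega⟩
      ⟨i.val % 2, by have := i.isLt; omega⟩ ⟨j.val % 2, by have := j.isLt; omega⟩

/-- The matrix h of the Lie sphere bilinear form, in 2×2 blocks. -/
def hm : Matrix (Fin 6) (Fin 6) ℝ := blk !![0, 0, -Lm; 0, 1, 0; -Lm, 0, 0]

theorem blk_eq_reindex_comp (M : Matrix (Fin 3) (Fin 3) (Matrix (Fin 2) (Fin 2) ℝ)) :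
    blk M = reindex finProdFinEquiv finProdFinEquiv (comp _ _ _ _ ℝ M) := rfl

theorem blk_mul (M N : Matrix (Fin 3) (Fin 3) (Matrix (Fin 2) (Fin 2) ℝ)) :
    blk (M * N) = blk M * blk N := by
  simp only [blk_eq_reindex_comp, ← compRingEquiv_apply, map_mul]
  exact (submatrix_mul_equiv (comp _ _ _ _ ℝ M) (comp _ _ _ _ ℝ N) _ _ _).symm

theorem blk_add (M N : Matrix (Fin 3) (Fin 3) (Matrix (Fin 2) (Fin 2) ℝ)) :
    blk (M + N) = blk M + blk N := rfl

theorem blk_transpose (M : Matrix (Fin 3) (Fin 3) (Matrix (Fin 2) (Fin 2) ℝ)) :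
    (blk M)ᵀ = blk (Mᵀ.map transpose) := rfl

theorem blk_injective : Function.Injective blk := by
  intro M N h
  simp only [blk_eq_reindex_comp] at h
  exact (comp _ _ _ _ ℝ).injective ((reindex _ _).injective h)

theorem blk_surjective : Function.Surjective blk := fun X =>
  ⟨(comp _ _ _ _ ℝ).symm (reindex finProdFinEquiv.symm finProdFinEquiv.symm X), by
    simp [blk_eq_reindex_comp]⟩

theorem blk_eq_zero_iff {M : Matrix (Fin 3) (Fin 3) (Matrix (Fin 2) (Fin 2) ℝ)} :
    blk M = 0 ↔ M = 0 :=
  blk_injective.eq_iff' rfl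

theorem of_fin_three_symm_eq_zero_iff {n α : Type*} [Zero α] (a b c e f i : Matrix n n α) :
    !![a, b, c; bᵀ, e, f; cᵀ, fᵀ, i] = 0 ↔ a = 0 ∧ b = 0 ∧ c = 0 ∧ e = 0 ∧ f = 0 ∧ i = 0 := by
  refine ⟨fun h => ?_, ?_⟩
  · have entry := fun k l => congrFun (congrFun h k) l
    exact ⟨entry 0 0, entry 0 1, entry 0 2, entry 1 1, entry 1 2, entry 2 2⟩
  · rintro ⟨rfl, rfl, rfl, rfl, rfl, rfl⟩
    rw [transpose_zero]
    exact (eta_fin_three 0).symm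

theorem Lm_transpose : Lmᵀ = Lm := by
  simp [Lm, ← Matrix.ext_iff, Fin.forall_fin_two]

theorem Lm_mul_Lm : Lm * Lm = 1 := by
  simp [Lm, one_fin_two]

theorem Lm_mul_eq_iff {P R : Matrix (Fin 2) (Fin 2) ℝ} : Lm * P = R ↔ P = Lm * R := by
  constructor <;> rintro rfl <;> simp [← mul_assoc, Lm_mul_Lm]

theorem transpose_mul_hm_add_hm_mul_blk (A B C D E F G P Q : Matrix (Fin 2) (Fin 2) ℝ) :
    (blk !![A, B, C; D, E, F; G, P, Q])ᵀ * hm + hm * blk !![A, B, C; D, E, F; G, P, Q] =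
      blk !![-(Gᵀ * Lm + Lm * G), Dᵀ - Lm * P, -(Aᵀ * Lm + Lm * Q);
             (Dᵀ - Lm * P)ᵀ, Eᵀ + E, F - Bᵀ * Lm;
             (-(Aᵀ * Lm + Lm * Q))ᵀ, (F - Bᵀ * Lm)ᵀ, -(Cᵀ * Lm + Lm * C)] := by
  rw [hm, blk_transpose, ← blk_mul, ← blk_mul, ← blk_add]
  congr 1
  ext1 i j
  fin_cases i <;> fin_cases j <;>
    simp [mul_apply, Fin.sum_univ_three, Lm_transpose, sub_eq_add_neg, add_comm]


theorem transpose_mul_Lm_add_Lm_mul_self_eq_zero_iff (G : Matrix (Fin 2) (Fin 2) ℝ) :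
    Gᵀ * Lm + Lm * G = 0 ↔ ∃ s : ℝ, G = s • I11 := by
  obtain ⟨a, b, c, d, rfl⟩ : ∃ a b c d, G = !![a, b; c, d] := ⟨_, _, _, _, eta_fin_two G⟩
  have key : !![a, b; c, d]ᵀ * Lm + Lm * !![a, b; c, d] = !![2 * c, a + d; a + d, 2 * b] := by
    ext i j
    fin_cases i <;> fin_cases j <;> simp [Lm, mul_apply, two_mul, add_comm]
  rw [key, I11]
  simp [← Matrix.ext_iff, Fin.forall_fin_two, eq_neg_iff_add_eq_zero, add_comm d]
  tauto

theorem transpose_mul_Lm_add_Lm_mul_eq_zero_iff (A Q : Matrix (Fin 2) (Fin 2) ℝ) :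
    Aᵀ * Lm + Lm * Q = 0 ↔ Q = -(Lm * Aᵀ * Lm) := by
  rw [add_eq_zero_iff_neg_eq, eq_comm, Lm_mul_eq_iff, mul_neg, mul_assoc]

theorem transpose_sub_Lm_mul_eq_zero_iff (D P : Matrix (Fin 2) (Fin 2) ℝ) :
    Dᵀ - Lm * P = 0 ↔ P = Lm * Dᵀ := by
  rw [sub_eq_zero, eq_comm, Lm_mul_eq_iff]

/-- A 6×6 real matrix X satisfies ᵗX h + h X = 0 iff it has the block form
[[X₁, ᵗX₂, t·I₁,₁],[X₄, X₅, X₂L],[s·I₁,₁, LᵗX₄, -LᵗX₁L]] with X₅ skew-symmetric. -/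
theorem stmt4 (X : Matrix (Fin 6) (Fin 6) ℝ) :
    Xᵀ * hm + hm * X = 0 ↔
    ∃ (X₁ X₂ X₄ X₅ : Matrix (Fin 2) (Fin 2) ℝ) (s t : ℝ),
      X₅ᵀ = -X₅ ∧
      X = blk !![X₁, X₂ᵀ, t • I11;
                 X₄, X₅, X₂ * Lm;
                 s • I11, Lm * X₄ᵀ, -(Lm * X₁ᵀ * Lm)] := by
  obtain ⟨M, rfl⟩ := blk_surjective X
  rw [eta_fin_three M, transpose_mul_hm_add_hm_mul_blk, blk_eq_zero_iff,
    of_fin_three_symm_eq_zero_iff, neg_eq_zero, neg_eq_zero, neg_eq_zero, transpose_mul_Lm_add_Lm_mul_self_eq_zero_iff,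
    transpose_mul_Lm_add_Lm_mul_self_eq_zero_iff, transpose_mul_Lm_add_Lm_mul_eq_zero_iff,
    transpose_sub_Lm_mul_eq_zero_iff, add_eq_zero_iff_eq_neg, sub_eq_zero]
  simp only [blk_injective.eq_iff, EmbeddingLike.apply_eq_iff_eq, vecCons_inj, and_true]
  constructor
  · rintro ⟨⟨s, hG⟩, hP, hQ, hE, hF, t, hC⟩
    exact ⟨M 0 0, (M 0 1)ᵀ, M 1 0, M 1 1, s, t, hE, ⟨rfl, (transpose_transpose _).symm, hC⟩,
      ⟨rfl, rfl, hF⟩, hG, hP, hQ⟩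
  · rintro ⟨X₁, X₂, X₄, X₅, s, t, hX₅, ⟨rfl, hB, hC⟩, ⟨rfl, rfl, hF⟩, hG, hP, hQ⟩
    exact ⟨⟨s, hG⟩, hP, hQ, hX₅, by rw [hF, hB, transpose_transpose], t, hC⟩
end

section
/- The map (v,ξ) ↦ (A₀(v), A₁(ξ)) sends unit tangent vectors of S³ to pairs of nonzero vectors spanning an isotropic 2-plane in ℝ^{4,2}: if v, ξ ∈ S³ ⊂ ℝ⁴ with v·ξ = 0, then ⟨A₀(v), A₀(v)⟩ = ⟨A₁(ξ), A₁(ξ)⟩ = ⟨A₀(v), A₁(ξ)⟩ = 0, and A₀(v), A₁(ξ) are linearly independent. -/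
/-- The Lie sphere bilinear form on ℝ⁶. -/
def Bform (x y : Fin 6 → ℝ) : ℝ :=
  -(x 0 * y 5 + x 5 * y 0) - (x 1 * y 4 + x 4 * y 1) + x 2 * y 2 + x 3 * y 3

/-- A₀(v) for v ∈ S³ ⊂ ℝ⁴. -/
noncomputable def A0 (v : Fin 4 → ℝ) : Fin 6 → ℝ :=
  ![(1 - v 0) / 2, -(v 1) / 2, v 2 / Real.sqrt 2, v 3 / Real.sqrt 2,
    v 1 / 2, (1 + v 0) / 2]

/-- A₁(ξ) for ξ ∈ S³ ⊂ ℝ⁴. -/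
noncomputable def A1 (ξ : Fin 4 → ℝ) : Fin 6 → ℝ :=
  ![-(ξ 0) / 2, (1 - ξ 1) / 2, ξ 2 / Real.sqrt 2, ξ 3 / Real.sqrt 2,
    (1 + ξ 1) / 2, ξ 0 / 2]

/-! The Lie form of the images is half the Euclidean data: `⟨A₀ v, A₀ v⟩ = (|v|² - 1)/2`,
`⟨A₁ ξ, A₁ ξ⟩ = (|ξ|² - 1)/2` and `⟨A₀ v, A₁ ξ⟩ = (v·ξ)/2`. Independence holds for all `v, ξ`:
the linear forms `x⁰ + x⁵` and `x¹ + x⁴` take the values `(1, 0)` on `A₀ v` and `(0, 1)` on `A₁ ξ`. -/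

lemma Bform_A0_self (v : Fin 4 → ℝ) : Bform (A0 v) (A0 v) = (∑ i, v i * v i - 1) / 2 := by
  simp only [Bform, A0, Fin.sum_univ_four, Matrix.cons_val_zero, Matrix.cons_val_one,
    Matrix.cons_val, div_mul_div_comm, Real.mul_self_sqrt zero_le_two]
  ring

lemma Bform_A1_self (ξ : Fin 4 → ℝ) : Bform (A1 ξ) (A1 ξ) = (∑ i, ξ i * ξ i - 1) / 2 := by
  simp only [Bform, A1, Fin.sum_univ_four, Matrix.cons_val_zero, Matrix.cons_val_one,
    Matrix.cons_val, div_mul_div_comm, Real.mul_self_sqrt zero_le_two]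
  ring

lemma Bform_A0_A1 (v ξ : Fin 4 → ℝ) : Bform (A0 v) (A1 ξ) = (∑ i, v i * ξ i) / 2 := by
  simp only [Bform, A0, A1, Fin.sum_univ_four, Matrix.cons_val_zero, Matrix.cons_val_one,
    Matrix.cons_val, div_mul_div_comm, Real.mul_self_sqrt zero_le_two]
  ring

lemma linearIndependent_A0_A1 (v ξ : Fin 4 → ℝ) : LinearIndependent ℝ ![A0 v, A1 ξ] := by
  rw [LinearIndependent.pair_iff]
  intro s t h
  have h05 := congrArg (fun x => x 0 + x 5) h
  have h14 := congrArg (fun x => x 1 + x 4) h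
  simp only [A0, A1, Pi.add_apply, Pi.smul_apply, smul_eq_mul, Matrix.cons_val_zero,
    Matrix.cons_val_one, Matrix.cons_val, Pi.zero_apply, add_zero] at h05 h14
  constructor <;> linarith

/-- If v, ξ ∈ S³ with v·ξ = 0, then A₀(v), A₁(ξ) span an isotropic 2-plane:
they are isotropic, mutually orthogonal for ⟨,⟩, and linearly independent. -/
theorem stmt8 (v ξ : Fin 4 → ℝ)
    (hv : ∑ i, v i * v i = 1) (hξ : ∑ i, ξ i * ξ i = 1)
    (hvξ : ∑ i, v i * ξ i = 0) :
    Bform (A0 v) (A0 v) = 0 ∧ Bform (A1 ξ) (A1 ξ) = 0 ∧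
    Bform (A0 v) (A1 ξ) = 0 ∧ LinearIndependent ℝ ![A0 v, A1 ξ] := by
  refine ⟨?_, ?_, ?_, linearIndependent_A0_A1 v ξ⟩
  · rw [Bform_A0_self, hv]; norm_num
  · rw [Bform_A1_self, hξ]; norm_num
  · rw [Bform_A0_A1, hvξ]; norm_num
end

section
/- Let p₁,...,p₁₄ : J → ℝ be differentiable functions on an interval J and κ₁, κ₂, κ₃, κ₄ : J → ℝ smooth functions with κ₁ never zero. Suppose the Euler–Lagrange (Cartan system) ODEs hold: p₁₃' = p₇ - p₈, p₁₄' = -(p₉+p₁₀), p₉ = p₁₀, p₁₁ = p₁₂, p₁₃ = 0, p₁₄ = 0, p₁₁' = -(p₈ + κ₂(p₉-p₁₀) + 2κ₁p₁₁), p₁₂' = -(p₇ + κ₂(p₉-p₁₀) - 2κ₁p₁₂), p₉' = -(-1 + p₅ + 2p₆ + κ₁(p₉-p₁₀) - 2κ₂p₁₂ + κ₃p₁₃ + 2κ₄p₁₄), p₁₀' = -(-1 + 2p₅ + p₆ + κ₁(p₉-p₁₀) + 2κ₂p₁₁ + κ₃p₁₃ + 2κ₄p₁₄), p₅' = -(p₁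 + κ₁p₅ + κ₂p₇ - κ₃p₈), p₆' = -(-p₄ - κ₁p₆ + κ₃p₇ - κ₂p₈), p₇' = -(-p₂ - κ₂p₅ - κ₃p₆ - κ₁p₇ + p₁₄), p₈' = -(p₃ + κ₃p₅ + κ₂p₆ + κ₁p₈ - p₁₄), p₁' = -(κ₁p₁ - κ₂p₂ - κ₃p₃ + κ₄p₅ - p₁₁ - p₁₃), p₂' = -(κ₂p₁ - κ₁p₂ - κ₃p₄ - κ₄p₇ - p₁₀), p₃' = -(κ₃p₁ + κ₁p₃ - κ₂p₄ + κ₄p₈ - p₉), p₄' = -(κ₃p₂ + κ₂p₃ - κ₁p₄ - κ₄p₆ - p₁₂ + p₁₃). Then the curvatures are constant and satisfy κ₃ = 0 and κ₄ = κ₁² - κ₂², and moreover p₇=p₈=p₉=p₁₀=p₁₁=p₁₂=p₁₃=p₁₄=0, p₅=p₆=1/3, p₁=p₄=-κ₁/3, p₂=p₃=-(κ₂+κ₃)/3. -/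
lemma aux_uniq17 {J : Set ℝ} (hJo : IsOpen J) {f g : ℝ → ℝ} {d e s : ℝ}
    (hs : s ∈ J) (hfg : ∀ x ∈ J, f x = g x)
    (hf : HasDerivAt f d s) (hg : HasDerivAt g e s) : d = e := by
  have h : g =ᶠ[nhds s] f :=
    Filter.eventuallyEq_of_mem (hJo.mem_nhds hs) (fun x hx => (hfg x hx).symm)
  exact (hf.congr_of_eventuallyEq h).unique hg

lemma aux_const17 {J : Set ℝ} (hJo : IsOpen J) (hJc : Convex ℝ J) {f : ℝ → ℝ}
    (hf : ∀ s ∈ J, HasDerivAt f 0 s) {x y : ℝ} (hx : x ∈ J) (hy : y ∈ J) :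
    f x = f y := by
  apply hJc.is_const_of_fderivWithin_eq_zero
    (fun s hs => (hf s hs).differentiableAt.differentiableWithinAt) ?_ hx hy
  intro s hs
  rw [fderivWithin_of_isOpen hJo hs, (hf s hs).hasFDerivAt.fderiv]
  ext; simp


/-- Euler–Lagrange (Cartan) system of the Lie arclength functional: any solution
on an open interval with κ₁ never zero has constant curvatures satisfying
κ₃ = 0 and κ₄ = κ₁² - κ₂², and the momenta take the stated constant values. -/
theorem stmt17 (a b : ℝ)
    (p1 p2 p3 p4 p5 p6 p7 p8 p9 p10 p11 p12 p13 p14 k1 k2 k3 k4 : ℝ → ℝ)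
    (J : Set ℝ) (hJ : J = Set.Ioo a b)
    (hk1 : ∀ s ∈ J, k1 s ≠ 0)
    (hk1s : ContDiffOn ℝ (⊤ : ℕ∞) k1 J) (hk2s : ContDiffOn ℝ (⊤ : ℕ∞) k2 J)
    (hk3s : ContDiffOn ℝ (⊤ : ℕ∞) k3 J) (hk4s : ContDiffOn ℝ (⊤ : ℕ∞) k4 J)
    (h13 : ∀ s ∈ J, HasDerivAt p13 (p7 s - p8 s) s)
    (h14 : ∀ s ∈ J, HasDerivAt p14 (-(p9 s + p10 s)) s)
    (e910 : ∀ s ∈ J, p9 s = p10 s)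
    (e1112 : ∀ s ∈ J, p11 s = p12 s)
    (e13 : ∀ s ∈ J, p13 s = 0)
    (e14 : ∀ s ∈ J, p14 s = 0)
    (h11 : ∀ s ∈ J, HasDerivAt p11
      (-(p8 s + k2 s * (p9 s - p10 s) + 2 * k1 s * p11 s)) s)
    (h12 : ∀ s ∈ J, HasDerivAt p12
      (-(p7 s + k2 s * (p9 s - p10 s) - 2 * k1 s * p12 s)) s)
    (h9 : ∀ s ∈ J, HasDerivAt p9
      (-(-1 + p5 s + 2 * p6 s + k1 s * (p9 s - p10 s) - 2 * k2 s * p12 s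
        + k3 s * p13 s + 2 * k4 s * p14 s)) s)
    (h10 : ∀ s ∈ J, HasDerivAt p10
      (-(-1 + 2 * p5 s + p6 s + k1 s * (p9 s - p10 s) + 2 * k2 s * p11 s
        + k3 s * p13 s + 2 * k4 s * p14 s)) s)
    (h5 : ∀ s ∈ J, HasDerivAt p5
      (-(p1 s + k1 s * p5 s + k2 s * p7 s - k3 s * p8 s)) s)
    (h6 : ∀ s ∈ J, HasDerivAt p6
      (-(-p4 s - k1 s * p6 s + k3 s * p7 s - k2 s * p8 s)) s)
    (h7 : ∀ s ∈ J, HasDerivAt p7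
      (-(-p2 s - k2 s * p5 s - k3 s * p6 s - k1 s * p7 s + p14 s)) s)
    (h8 : ∀ s ∈ J, HasDerivAt p8
      (-(p3 s + k3 s * p5 s + k2 s * p6 s + k1 s * p8 s - p14 s)) s)
    (h1 : ∀ s ∈ J, HasDerivAt p1
      (-(k1 s * p1 s - k2 s * p2 s - k3 s * p3 s + k4 s * p5 s
        - p11 s - p13 s)) s)
    (h2 : ∀ s ∈ J, HasDerivAt p2
      (-(k2 s * p1 s - k1 s * p2 s - k3 s * p4 s - k4 s * p7 s - p10 s)) s)
    (h3 : ∀ s ∈ J, HasDerivAt p3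
      (-(k3 s * p1 s + k1 s * p3 s - k2 s * p4 s + k4 s * p8 s - p9 s)) s)
    (h4 : ∀ s ∈ J, HasDerivAt p4
      (-(k3 s * p2 s + k2 s * p3 s - k1 s * p4 s - k4 s * p6 s
        - p12 s + p13 s)) s) :
    (∀ s ∈ J, ∀ s' ∈ J,
      k1 s = k1 s' ∧ k2 s = k2 s' ∧ k3 s = k3 s' ∧ k4 s = k4 s') ∧
    (∀ s ∈ J,
      k3 s = 0 ∧ k4 s = (k1 s) ^ 2 - (k2 s) ^ 2 ∧
      p7 s = 0 ∧ p8 s = 0 ∧ p9 s = 0 ∧ p10 s = 0 ∧ p11 s = 0 ∧ p12 s = 0 ∧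
      p13 s = 0 ∧ p14 s = 0 ∧ p5 s = 1 / 3 ∧ p6 s = 1 / 3 ∧
      p1 s = -(k1 s) / 3 ∧ p4 s = -(k1 s) / 3 ∧
      p2 s = -(k2 s + k3 s) / 3 ∧ p3 s = -(k2 s + k3 s) / 3) := by
  
  have hJo : IsOpen J := by rw [hJ]; exact isOpen_Ioo
  have hJc : Convex ℝ J := by rw [hJ]; exact convex_Ioo a b
  -- p9 = p10 = 0
  have f9 : ∀ s ∈ J, p9 s = 0 := by
    intro s hs
    have E := aux_uniq17 hJo hs e14 (h14 s hs) (hasDerivAt_const s 0)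
    have e1 := e910 s hs
    linarith
  have f10 : ∀ s ∈ J, p10 s = 0 := fun s hs => (e910 s hs).symm.trans (f9 s hs)
  -- p7 = p8
  have f78 : ∀ s ∈ J, p7 s = p8 s := by
    intro s hs
    have E := aux_uniq17 hJo hs e13 (h13 s hs) (hasDerivAt_const s 0)
    linarith
  -- p11 = p12 = 0
  have f11 : ∀ s ∈ J, p11 s = 0 := by
    intro s hs
    have E := aux_uniq17 hJo hs e1112 (h11 s hs) (h12 s hs)
    have e1 := e910 s hs
    have e2 := e1112 s hs
    have e3 := f78 s hs
    have h0 : k1 s * p11 s = 0 := by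
      simp only [e1, e3, e2.symm] at E; linarith
    rcases mul_eq_zero.1 h0 with h | h
    · exact absurd h (hk1 s hs)
    · exact h
  have f12 : ∀ s ∈ J, p12 s = 0 := fun s hs => (e1112 s hs).symm.trans (f11 s hs)
  -- p8 = p7 = 0
  have f8 : ∀ s ∈ J, p8 s = 0 := by
    intro s hs
    have E := aux_uniq17 hJo hs f11 (h11 s hs) (hasDerivAt_const s 0)
    simp only [e910 s hs, f11 s hs] at E
    linarith
  have f7 : ∀ s ∈ J, p7 s = 0 := fun s hs => (f78 s hs).trans (f8 s hs)
  -- p5 = p6 = 1/3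
  have f5 : ∀ s ∈ J, p5 s = 1 / 3 := by
    intro s hs
    have E9 := aux_uniq17 hJo hs f9 (h9 s hs) (hasDerivAt_const s 0)
    have E10 := aux_uniq17 hJo hs f10 (h10 s hs) (hasDerivAt_const s 0)
    simp only [e910 s hs, f11 s hs, f12 s hs, e13 s hs, e14 s hs] at E9 E10
    linarith
  have f6 : ∀ s ∈ J, p6 s = 1 / 3 := by
    intro s hs
    have E9 := aux_uniq17 hJo hs f9 (h9 s hs) (hasDerivAt_const s 0)
    have E10 := aux_uniq17 hJo hs f10 (h10 s hs) (hasDerivAt_const s 0)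
    simp only [e910 s hs, f11 s hs, f12 s hs, e13 s hs, e14 s hs] at E9 E10
    linarith
  -- p1, p4, p2, p3
  have f1 : ∀ s ∈ J, p1 s = -k1 s / 3 := by
    intro s hs
    have E := aux_uniq17 hJo hs f5 (h5 s hs) (hasDerivAt_const s (1 / 3))
    simp only [f5 s hs, f7 s hs, f8 s hs] at E
    linarith
  have f4 : ∀ s ∈ J, p4 s = -k1 s / 3 := by
    intro s hs
    have E := aux_uniq17 hJo hs f6 (h6 s hs) (hasDerivAt_const s (1 / 3))
    simp only [f6 s hs, f7 s hs, f8 s hs] at E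
    linarith
  have f2 : ∀ s ∈ J, p2 s = -(k2 s + k3 s) / 3 := by
    intro s hs
    have E := aux_uniq17 hJo hs f7 (h7 s hs) (hasDerivAt_const s 0)
    simp only [f5 s hs, f6 s hs, f7 s hs, e14 s hs] at E
    linarith
  have f3 : ∀ s ∈ J, p3 s = -(k2 s + k3 s) / 3 := by
    intro s hs
    have E := aux_uniq17 hJo hs f8 (h8 s hs) (hasDerivAt_const s 0)
    simp only [f5 s hs, f6 s hs, f8 s hs, e14 s hs] at E
    linarith
  -- derivatives of the curvatures
  have dk : ∀ k : ℝ → ℝ, ContDiffOn ℝ (⊤ : ℕ∞) k J → ∀ s ∈ J, HasDerivAt k (deriv k s) s := by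
    intro k hk s hs
    exact ((hk.differentiableOn (by simp) s hs).differentiableAt (hJo.mem_nhds hs)).hasDerivAt
  have A1 : ∀ s ∈ J,
      -(k1 s * p1 s - k2 s * p2 s - k3 s * p3 s + k4 s * p5 s - p11 s - p13 s)
        = -deriv k1 s / 3 := by
    intro s hs
    exact aux_uniq17 hJo hs f1 (h1 s hs) ((dk k1 hk1s s hs).neg.div_const 3)
  have A4 : ∀ s ∈ J,
      -(k3 s * p2 s + k2 s * p3 s - k1 s * p4 s - k4 s * p6 s - p12 s + p13 s)
        = -deriv k1 s / 3 := by
    intro s hs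
    exact aux_uniq17 hJo hs f4 (h4 s hs) ((dk k1 hk1s s hs).neg.div_const 3)
  have A2 : ∀ s ∈ J,
      -(k2 s * p1 s - k1 s * p2 s - k3 s * p4 s - k4 s * p7 s - p10 s)
        = -(deriv k2 s + deriv k3 s) / 3 := by
    intro s hs
    exact aux_uniq17 hJo hs f2 (h2 s hs)
      (((dk k2 hk2s s hs).add (dk k3 hk3s s hs)).neg.div_const 3)
  have A3 : ∀ s ∈ J,
      -(k3 s * p1 s + k1 s * p3 s - k2 s * p4 s + k4 s * p8 s - p9 s)
        = -(deriv k2 s + deriv k3 s) / 3 := by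
    intro s hs
    exact aux_uniq17 hJo hs f3 (h3 s hs)
      (((dk k2 hk2s s hs).add (dk k3 hk3s s hs)).neg.div_const 3)
  have B1 : ∀ s ∈ J, deriv k1 s = 0 := by
    intro s hs
    have E1 := A1 s hs; have E4 := A4 s hs
    simp only [f1 s hs, f2 s hs, f3 s hs, f4 s hs, f5 s hs, f6 s hs, f11 s hs,
      f12 s hs, e13 s hs] at E1 E4
    nlinarith [E1, E4]
  have B4 : ∀ s ∈ J, k4 s = (k1 s) ^ 2 - (k2 s + k3 s) ^ 2 := by
    intro s hs
    have E1 := A1 s hs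
    simp only [f1 s hs, f2 s hs, f3 s hs, f5 s hs, f11 s hs, e13 s hs, B1 s hs] at E1
    nlinarith [E1]
  have fk3 : ∀ s ∈ J, k3 s = 0 := by
    intro s hs
    have E2 := A2 s hs; have E3 := A3 s hs
    simp only [f1 s hs, f2 s hs, f3 s hs, f4 s hs, f7 s hs, f8 s hs, f9 s hs,
      f10 s hs] at E2 E3
    have h0 : k1 s * k3 s = 0 := by nlinarith [E2, E3]
    rcases mul_eq_zero.1 h0 with h | h
    · exact absurd h (hk1 s hs)
    · exact h
  have B3 : ∀ s ∈ J, deriv k3 s = 0 := by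
    intro s hs
    exact aux_uniq17 hJo hs fk3 (dk k3 hk3s s hs) (hasDerivAt_const s 0)
  have B2 : ∀ s ∈ J, deriv k2 s = 0 := by
    intro s hs
    have E2 := A2 s hs; have E3 := A3 s hs
    simp only [f1 s hs, f2 s hs, f3 s hs, f4 s hs, f7 s hs, f8 s hs, f9 s hs,
      f10 s hs, B3 s hs] at E2 E3
    nlinarith [E2, E3]
  have fk4 : ∀ s ∈ J, k4 s = (k1 s) ^ 2 - (k2 s) ^ 2 := by
    intro s hs
    have := B4 s hs
    rw [fk3 s hs] at this
    simpa using this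
  have Hk1 : ∀ s ∈ J, HasDerivAt k1 0 s := fun s hs => B1 s hs ▸ dk k1 hk1s s hs
  have Hk2 : ∀ s ∈ J, HasDerivAt k2 0 s := fun s hs => B2 s hs ▸ dk k2 hk2s s hs
  have Hk3 : ∀ s ∈ J, HasDerivAt k3 0 s := fun s hs => B3 s hs ▸ dk k3 hk3s s hs
  have Hk4 : ∀ s ∈ J, HasDerivAt k4 0 s := by
    intro s hs
    have hg := ((Hk1 s hs).pow 2).sub ((Hk2 s hs).pow 2)
    have hg0 : HasDerivAt (fun x => k1 x ^ 2 - k2 x ^ 2) 0 s := by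
      simpa using (show HasDerivAt (fun x => k1 x ^ 2 - k2 x ^ 2) _ s from hg)
    exact hg0.congr_of_eventuallyEq
      (Filter.eventuallyEq_of_mem (hJo.mem_nhds hs) (fun x hx => fk4 x hx))
  refine ⟨?_, ?_⟩
  · intro s hs s' hs'
    exact ⟨aux_const17 hJo hJc Hk1 hs hs', aux_const17 hJo hJc Hk2 hs hs',
      aux_const17 hJo hJc Hk3 hs hs', aux_const17 hJo hJc Hk4 hs hs'⟩
  · intro s hs
    exact ⟨fk3 s hs, fk4 s hs, f7 s hs, f8 s hs, f9 s hs, f10 s hs, f11 s hs,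
      f12 s hs, e13 s hs, e14 s hs, f5 s hs, f6 s hs, f1 s hs, f4 s hs,
      f2 s hs, f3 s hs⟩
end
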